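/- arXiv:1712.03281 — 3 statements merged into one kernel-verified Lean document; each statement's English description precedes it below -/
import Mathlib

section
/- Sparse vector version of the tight hard-thresholding bound: let θ ∈ ℝ^n, let θ* ∈ ℝ^n be supported on at most r* coordinates, and let θ' be obtained from θ by keeping its r largest-magnitude entries (r > r*) and zeroing the rest. Then ‖θ' − θ*‖₂² ≤ (1 + 2√(r*)/√(r − r*)) ‖θ − θ*‖₂². -/
/-!
Write `A = T \ S` for the support coordinates that are discarded and `B = S \ T` for the kept
coordinates outside the support, so that `#A + (r - r*) ≤ #B`. The error of `θ'` exceeds that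
of `θ` only through `∑_{i ∈ A} θ*ᵢ²`. Each discarded `|θᵢ|` is dominated by every kept `|θⱼ|`,
hence by the root mean square `a` of `θ` over `B`, where `θ* = 0`; so
`θ*ᵢ² ≤ (θᵢ - θ*ᵢ)² + 2a|θᵢ - θ*ᵢ| + a²`. Summing over `A`, Cauchy–Schwarz and AM–GM bound the
excess by `2√(#A / #B)` times the error of `θ` on `A ∪ B`, and `#A / #B ≤ r* / (r - r*)`.
-/

open Finset

namespace HardThresholding

variable {ι : Type*}

theorem card_mul_sq_le_sum_sq {B : Finset ι} {f : ι → ℝ} {c : ℝ} (h : ∀ j ∈ B, |c| ≤ |f j|) :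
    #B * c ^ 2 ≤ ∑ j ∈ B, f j ^ 2 := by
  rw [← nsmul_eq_mul, ← sum_const]
  exact sum_le_sum fun j hj => sq_le_sq.2 (h j hj)

theorem sq_le_sq_sub_add_of_abs_le {x y a : ℝ} (hx : |x| ≤ a) :
    y ^ 2 ≤ (x - y) ^ 2 + 2 * a * |x - y| + a ^ 2 := by
  have hy : |y| ≤ |x - y| + a := by
    calc |y| = |x - (x - y)| := by ring_nf
      _ ≤ |x| + |x - y| := abs_sub _ _
      _ ≤ |x - y| + a := by linarith
  calc y ^ 2 = |y| ^ 2 := (sq_abs y).symm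
    _ ≤ (|x - y| + a) ^ 2 := pow_le_pow_left₀ (abs_nonneg y) hy 2
    _ = (x - y) ^ 2 + 2 * a * |x - y| + a ^ 2 := by rw [add_sq, sq_abs]; ring

theorem sum_abs_le_sqrt_card_mul_sqrt_sum_sq (A : Finset ι) (f : ι → ℝ) :
    ∑ i ∈ A, |f i| ≤ √(#A) * √(∑ i ∈ A, f i ^ 2) := by
  simpa using Real.sum_mul_le_sqrt_mul_sqrt A 1 fun i => |f i|

theorem sq_mul_add_two_mul_sqrt_mul_sqrt_le {s E F : ℝ} (hs₀ : 0 ≤ s) (hs₁ : s ≤ 1)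
    (hE : 0 ≤ E) (hF : 0 ≤ F) :
    s ^ 2 * E + 2 * s * (√E * √F) ≤ 2 * s * (E + F) := by
  have hsE : s ^ 2 * E ≤ s * E := mul_le_mul_of_nonneg_right (by nlinarith) hE
  have amgm : 2 * (√E * √F) ≤ E + F := by
    nlinarith [sq_nonneg (√E - √F), Real.sq_sqrt hE, Real.sq_sqrt hF]
  nlinarith [mul_le_mul_of_nonneg_left amgm hs₀]

theorem sum_sq_le_of_abs_le_of_eq_zero {A B : Finset ι} {x y : ι → ℝ} (hB : B.Nonempty)
    (hAB : #A ≤ #B) (hdom : ∀ i ∈ A, ∀ j ∈ B, |x i| ≤ |x j|) (hy : ∀ j ∈ B, y j = 0) :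
    ∑ i ∈ A, y i ^ 2 ≤ ∑ i ∈ A, (x i - y i) ^ 2 +
      2 * √(#A / #B) * (∑ j ∈ B, (x j - y j) ^ 2 + ∑ i ∈ A, (x i - y i) ^ 2) := by
  set E := ∑ j ∈ B, (x j - y j) ^ 2
  set F := ∑ i ∈ A, (x i - y i) ^ 2
  set s := √(#A / #B)
  set a := √(E / #B)
  have hB₀ : (0 : ℝ) < #B := by exact_mod_cast hB.card_pos
  have hE : 0 ≤ E := sum_nonneg fun j _ => sq_nonneg _
  have hF : 0 ≤ F := sum_nonneg fun i _ => sq_nonneg _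
  have hxa : ∀ i ∈ A, |x i| ≤ a := by
    intro i hi
    rw [← Real.sqrt_sq_eq_abs]
    refine Real.sqrt_le_sqrt ((le_div_iff₀ hB₀).2 ?_)
    rw [mul_comm]
    refine (card_mul_sq_le_sum_sq (hdom i hi)).trans_eq (sum_congr rfl fun j hj => ?_)
    rw [hy j hj, sub_zero]
  have hsum : ∑ i ∈ A, y i ^ 2 ≤ F + 2 * a * ∑ i ∈ A, |x i - y i| + #A * a ^ 2 := by
    calc ∑ i ∈ A, y i ^ 2 ≤ ∑ i ∈ A, ((x i - y i) ^ 2 + 2 * a * |x i - y i| + a ^ 2) :=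
          sum_le_sum fun i hi => sq_le_sq_sub_add_of_abs_le (hxa i hi)
      _ = F + 2 * a * ∑ i ∈ A, |x i - y i| + #A * a ^ 2 := by
          rw [sum_add_distrib, sum_add_distrib, sum_const, nsmul_eq_mul, mul_sum]
  have hcs : a * ∑ i ∈ A, |x i - y i| ≤ s * (√E * √F) := by
    have has : a * √(#A) = s * √E := by
      rw [← Real.sqrt_mul (by positivity), ← Real.sqrt_mul (by positivity), div_mul_comm]
    calc a * ∑ i ∈ A, |x i - y i| ≤ a * (√(#A) * √F) :=
          mul_le_mul_of_nonneg_left (sum_abs_le_sqrt_card_mul_sqrt_sum_sq A _) (by positivity)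
      _ = s * (√E * √F) := by rw [← mul_assoc, has, mul_assoc]
  have hsq : #A * a ^ 2 = s ^ 2 * E := by
    rw [Real.sq_sqrt (by positivity), Real.sq_sqrt (by positivity)]
    ring
  have hs₁ : s ≤ 1 := Real.sqrt_le_one.2 ((div_le_one hB₀).2 (by exact_mod_cast hAB))
  have hnum := sq_mul_add_two_mul_sqrt_mul_sqrt_le (Real.sqrt_nonneg _) hs₁ hE hF
  linarith

theorem sqrt_div_le_sqrt_div_sqrt_of_add_le {a b p m : ℝ} (ha : 0 ≤ a) (hap : a ≤ p) (hm : 0 < m)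
    (hab : a + m ≤ b) : √(a / b) ≤ √p / √m := by
  rw [← Real.sqrt_div' _ hm.le]
  exact Real.sqrt_le_sqrt (div_le_div₀ (ha.trans hap) hap hm (by linarith))

theorem sum_add_sum_le_sum_of_disjoint [Fintype ι] {s t : Finset ι} {f : ι → ℝ}
    (hst : Disjoint s t) (hf : ∀ i, 0 ≤ f i) : ∑ i ∈ s, f i + ∑ i ∈ t, f i ≤ ∑ i, f i := by
  classical
  rw [← sum_union hst]
  exact sum_le_univ_sum_of_nonneg hf

theorem sum_sq_sub_eq_of_eq_ite [Fintype ι] [DecidableEq ι] {S T : Finset ι} {x x' y : ι → ℝ}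
    (hx' : ∀ i, x' i = if i ∈ S then x i else 0) (hy : ∀ i ∉ T, y i = 0) :
    ∑ i, (x' i - y i) ^ 2 = ∑ i ∈ S, (x i - y i) ^ 2 + ∑ i ∈ T \ S, y i ^ 2 := by
  rw [← sum_add_sum_compl S]
  congr 1
  · exact sum_congr rfl fun i hi => by rw [hx', if_pos hi]
  · have hoff : ∀ i ∈ Sᶜ, (x' i - y i) ^ 2 = y i ^ 2 := fun i hi => by
      rw [hx', if_neg (mem_compl.1 hi)]
      ring
    rw [sum_congr rfl hoff]
    refine (sum_subset (fun i hi => mem_compl.2 (mem_sdiff.1 hi).2) fun i hi hiA => ?_).symm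
    rw [hy i fun hiT => hiA (mem_sdiff.2 ⟨hiT, mem_compl.1 hi⟩)]
    ring

end HardThresholding

open HardThresholding

/-- Sparse-vector version of the tight hard-thresholding bound: keeping the `r`
largest-magnitude entries of `θ` (with `r > r*`) and zeroing the rest yields `θ'` with
`‖θ' − θ*‖₂² ≤ (1 + 2√(r*)/√(r − r*)) ‖θ − θ*‖₂²` for any `θ*` supported on at most `r*`
coordinates. -/
theorem hard_thresholding_tight_bound {n r rs : ℕ} (hr : rs < r)
    (θ θs θ' : Fin n → ℝ)
    (S : Finset (Fin n)) (hScard : S.card = r)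
    (hTop : ∀ i ∈ S, ∀ j ∉ S, |θ j| ≤ |θ i|)
    (hθ' : ∀ i, θ' i = if i ∈ S then θ i else 0)
    (T : Finset (Fin n)) (hTcard : T.card ≤ rs)
    (hsupp : ∀ i ∉ T, θs i = 0) :
    ∑ i, (θ' i - θs i) ^ 2 ≤
      (1 + 2 * Real.sqrt rs / Real.sqrt ((r : ℝ) - rs)) * ∑ i, (θ i - θs i) ^ 2 := by
  have hcard : #(T \ S) + (r - rs) ≤ #(S \ T) := by
    have hS := card_sdiff_add_card_inter S T
    have hT := card_sdiff_add_card_inter T S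
    rw [inter_comm] at hT
    omega
  have hexcess := sum_sq_le_of_abs_le_of_eq_zero (A := T \ S) (B := S \ T) (x := θ) (y := θs)
    (card_pos.1 (by omega)) (by omega)
    (fun i hi j hj => hTop j (mem_sdiff.1 hj).1 i (mem_sdiff.1 hi).2)
    (fun j hj => hsupp j (mem_sdiff.1 hj).2)
  have hratio : √(#(T \ S) / #(S \ T)) ≤ √rs / √((r : ℝ) - rs) := by
    refine sqrt_div_le_sqrt_div_sqrt_of_add_le (Nat.cast_nonneg _)
      (by exact_mod_cast (card_le_card sdiff_subset).trans hTcard)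
      (sub_pos.2 (by exact_mod_cast hr)) ?_
    rw [← Nat.cast_sub hr.le]
    exact_mod_cast hcard
  have hkept := sum_add_sum_le_sum_of_disjoint (f := fun i => (θ i - θs i) ^ 2)
    (disjoint_sdiff (s := S) (t := T)) fun i => sq_nonneg _
  have hsymm := sum_add_sum_le_sum_of_disjoint (f := fun i => (θ i - θs i) ^ 2)
    (disjoint_sdiff_sdiff (x := S) (y := T)) fun i => sq_nonneg _
  rw [sum_sq_sub_eq_of_eq_ite hθ' hsupp, mul_div_assoc]
  linarith [mul_le_mul hratio hsymm (by positivity) (by positivity)]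
end

section
/- Suppose F : ℝ^{p×p} → ℝ satisfies restricted strong convexity and smoothness with constants m and M on rank-(2r+r*) matrices, let L, L* have rank at most r and r* respectively, let J be a subspace containing the column spaces of L and L*, and let η > 0. Then ‖L − L* − η·P_J(∇F(L) − ∇F(L*))‖²_F ≤ (1 + η²M² − 2ηm)‖L − L*‖²_F. -/
open Matrix

/-- Frobenius norm of a square real matrix. -/
noncomputable def frob {p : ℕ} (A : Matrix (Fin p) (Fin p) ℝ) : ℝ :=
  Real.sqrt (∑ i, ∑ j, (A i j)^2)

theorem Matrix.trace_transpose_mul_eq_sum {m n R : Type*} [Fintype m] [Fintype n]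
    [AddCommMonoid R] [Mul R] (A B : Matrix m n R) :
    trace (Aᵀ * B) = ∑ i, ∑ j, A i j * B i j :=
  Finset.sum_comm

lemma frob_nonneg {p : ℕ} (A : Matrix (Fin p) (Fin p) ℝ) : 0 ≤ frob A :=
  Real.sqrt_nonneg _

lemma frob_sq {p : ℕ} (A : Matrix (Fin p) (Fin p) ℝ) :
    frob A ^ 2 = ∑ i, ∑ j, A i j ^ 2 :=
  Real.sq_sqrt (by positivity)

lemma frob_sub_smul_sq {p : ℕ} (D G : Matrix (Fin p) (Fin p) ℝ) (η : ℝ) :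
    frob (D - η • G) ^ 2 = frob D ^ 2 - 2 * η * trace (Gᵀ * D) + η ^ 2 * frob G ^ 2 := by
  simp only [frob_sq, trace_transpose_mul_eq_sum, Finset.mul_sum, ← Finset.sum_add_distrib,
    ← Finset.sum_sub_distrib]
  exact Finset.sum_congr rfl fun i _ => Finset.sum_congr rfl fun j _ => by
    rw [Matrix.sub_apply, Matrix.smul_apply, smul_eq_mul]; ring

theorem rsc_rss_gradient_step_contraction_general {p : ℕ}
    (gradF : Matrix (Fin p) (Fin p) ℝ → Matrix (Fin p) (Fin p) ℝ)
    (m M η : ℝ) (hη : 0 < η)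
    (L Ls : Matrix (Fin p) (Fin p) ℝ)
    (PJ : Matrix (Fin p) (Fin p) ℝ →ₗ[ℝ] Matrix (Fin p) (Fin p) ℝ)
    (hRSC : m * frob (L - Ls) ^ 2 ≤ trace ((PJ (gradF L - gradF Ls))ᵀ * (L - Ls)))
    (hRSS : frob (PJ (gradF L - gradF Ls)) ≤ M * frob (L - Ls)) :
    frob (L - Ls - η • PJ (gradF L - gradF Ls)) ^ 2 ≤
      (1 + η ^ 2 * M ^ 2 - 2 * η * m) * frob (L - Ls) ^ 2 := by
  set D := L - Ls
  set G := PJ (gradF L - gradF Ls)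
  have hG : 0 ≤ frob G := frob_nonneg G
  calc frob (D - η • G) ^ 2
      = frob D ^ 2 - 2 * η * trace (Gᵀ * D) + η ^ 2 * frob G ^ 2 := frob_sub_smul_sq D G η
    _ ≤ frob D ^ 2 - 2 * η * (m * frob D ^ 2) + η ^ 2 * (M * frob D) ^ 2 := by gcongr
    _ = (1 + η ^ 2 * M ^ 2 - 2 * η * m) * frob D ^ 2 := by ring

/-- Gradient-step contraction under restricted strong convexity/smoothness: if `F` has
gradient `gradF` satisfying the RSC/RSS inequalities with constants `m, M` on rank-
`(2r+r*)` matrices, `L` and `L*` have rank at most `r` and `r*`, and `P_J` is the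
orthogonal projection onto a subspace `J` containing the column spaces of `L` and `L*`
(so it fixes both), then
`‖L − L* − η P_J(∇F(L) − ∇F(L*))‖²_F ≤ (1 + η²M² − 2ηm)‖L − L*‖²_F`. -/
theorem rsc_rss_gradient_step_contraction {p r rs : ℕ}
    (F : Matrix (Fin p) (Fin p) ℝ → ℝ)
    (gradF : Matrix (Fin p) (Fin p) ℝ → Matrix (Fin p) (Fin p) ℝ)
    (m M η : ℝ) (hm : 0 < m) (hmM : m ≤ M) (hη : 0 < η)
    (L Ls : Matrix (Fin p) (Fin p) ℝ)
    (hL : L.rank ≤ r) (hLs : Ls.rank ≤ rs)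
    (hrank : L.rank ≤ 2 * r + rs ∧ Ls.rank ≤ 2 * r + rs)
    (PJ : Matrix (Fin p) (Fin p) ℝ →ₗ[ℝ] Matrix (Fin p) (Fin p) ℝ)
    (hidem : ∀ X, PJ (PJ X) = PJ X)
    (hsym : ∀ X Y, trace ((PJ X)ᵀ * Y) = trace (Xᵀ * PJ Y))
    (hfixL : PJ L = L) (hfixLs : PJ Ls = Ls)
    (hRSC : m * frob (L - Ls) ^ 2 ≤ trace ((PJ (gradF L - gradF Ls))ᵀ * (L - Ls)))
    (hRSS : frob (PJ (gradF L - gradF Ls)) ≤ M * frob (L - Ls)) :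
    frob (L - Ls - η • PJ (gradF L - gradF Ls)) ^ 2 ≤
      (1 + η ^ 2 * M ^ 2 - 2 * η * m) * frob (L - Ls) ^ 2 :=
  rsc_rss_gradient_step_contraction_general gradF m M η hη L Ls PJ hRSC hRSS
end

section
/- Fix 0 < m ≤ M and ε ∈ (0,1). If r ≥ (C/(1−ε))·(M/m)⁴·r* for a sufficiently large constant C, then ν := √(1 + (2/√(1−ε))·√(r*)/√(r−r*)) satisfies ν²·(1 − m²/M²) < 1; hence with η = m/M², the contraction factor ρ = ν·√(1 + M²η² − 2mη) = ν·√(1 − m²/M²) is strictly less than 1. -/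
/-!
Write `t = m²/M² ∈ (0, 1]` and `s = 1 - ε`. Since `(M/m)⁴ = t⁻²`, the rank condition with
`C = 5` reads `5 r* ≤ s t² r`, and as `s t² ≤ 1` this leaves `4 r* ≤ t² s (r - r*)`. Taking square
roots, the expansiveness excess `ν² - 1 = 2 √r* / √(s (r - r*))` is at most `t`, so
`ν² (1 - t) ≤ (1 + t)(1 - t) = 1 - t² < 1`.
-/

open Real

theorem two_mul_sqrt_div_sqrt_le {x y t : ℝ} (ht : 0 ≤ t) (h : 4 * x ≤ t ^ 2 * y) :
    2 * √x / √y ≤ t := by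
  rcases (sqrt_nonneg y).eq_or_lt with hy | hy
  · simp [← hy, ht]
  have hsqrt : √(4 * x) ≤ √(t ^ 2 * y) := sqrt_le_sqrt h
  rw [show (4 : ℝ) = 2 ^ 2 by norm_num, sqrt_mul (by positivity), sqrt_mul (by positivity),
    sqrt_sq zero_le_two, sqrt_sq ht] at hsqrt
  rwa [div_le_iff₀ hy]

theorem four_mul_le_of_rank_inflation {s t x r : ℝ} (hs : 0 < s) (hs1 : s ≤ 1) (ht : 0 < t)
    (ht1 : t ≤ 1) (hx : 0 ≤ x) (hr : 5 / s * (t ^ 2)⁻¹ * x ≤ r) :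
    4 * x ≤ t ^ 2 * (s * (r - x)) := by
  have h5 : 5 * x ≤ s * t ^ 2 * r := by
    rw [show 5 / s * (t ^ 2)⁻¹ * x = 5 * x / (s * t ^ 2) by field_simp, div_le_iff₀ (by positivity)]
      at hr
    linarith
  have hst : s * t ^ 2 ≤ 1 := mul_le_one₀ hs1 (by positivity) (pow_le_one₀ ht.le ht1)
  have hstx : s * t ^ 2 * x ≤ x := mul_le_of_le_one_left hx hst
  linarith

theorem one_add_mul_one_sub_lt_one {a t : ℝ} (hat : a ≤ t) (ht : 0 < t) (ht1 : t ≤ 1) :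
    (1 + a) * (1 - t) < 1 :=
  calc (1 + a) * (1 - t) ≤ (1 + t) * (1 - t) := by gcongr
    _ = 1 - t ^ 2 := by ring
    _ < 1 := by linarith [pow_pos ht 2]

/-- Rank-inflation makes the MAPLE contraction factor strictly less than one: there is a
universal constant `C` such that whenever `0 < m ≤ M`, `ε ∈ (0,1)` and
`r ≥ (C/(1−ε))(M/m)⁴ r*`, the factor `ν = √(1 + (2/√(1−ε))√(r*)/√(r−r*))` satisfies
`ν²(1 − m²/M²) < 1`; hence with `η = m/M²` the contraction factor
`ρ = ν√(1 + M²η² − 2mη)` is strictly less than `1`. -/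
theorem rank_inflation_contraction :
    ∃ C : ℝ, 0 < C ∧ ∀ (m M ε : ℝ) (r rs : ℕ),
      0 < m → m ≤ M → 0 < ε → ε < 1 →
      (C / (1 - ε)) * (M / m) ^ 4 * (rs : ℝ) ≤ (r : ℝ) →
      (Real.sqrt (1 + (2 / Real.sqrt (1 - ε)) * Real.sqrt rs /
            Real.sqrt ((r : ℝ) - rs))) ^ 2 * (1 - m ^ 2 / M ^ 2) < 1 ∧
      Real.sqrt (1 + (2 / Real.sqrt (1 - ε)) * Real.sqrt rs /
            Real.sqrt ((r : ℝ) - rs)) *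
          Real.sqrt (1 + M ^ 2 * (m / M ^ 2) ^ 2 - 2 * m * (m / M ^ 2)) < 1 := by
  refine ⟨5, by norm_num, fun m M ε r rs hm hmM hε hε1 hr => ?_⟩
  have hM : 0 < M := hm.trans_le hmM
  set t := m ^ 2 / M ^ 2 with ht_def
  have ht : 0 < t := by positivity
  have ht1 : t ≤ 1 := (div_le_one (by positivity)).2 (pow_le_pow_left₀ hm.le hmM 2)
  have hgrad_step : 1 + M ^ 2 * (m / M ^ 2) ^ 2 - 2 * m * (m / M ^ 2) = 1 - t := by
    rw [ht_def]; field_simp; ring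
  rw [show (M / m) ^ 4 = (t ^ 2)⁻¹ by rw [ht_def]; field_simp] at hr
  have hexcess : 2 / √(1 - ε) * √rs / √(r - rs) ≤ t := by
    rw [div_mul_eq_mul_div, div_div, ← sqrt_mul (by linarith)]
    exact two_mul_sqrt_div_sqrt_le ht.le
      (four_mul_le_of_rank_inflation (by linarith) (by linarith) ht ht1 rs.cast_nonneg hr)
  have hcontr := one_add_mul_one_sub_lt_one hexcess ht ht1
  refine ⟨by rwa [sq_sqrt (by positivity)], ?_⟩
  rw [hgrad_step, ← sqrt_mul (by positivity), sqrt_lt' one_pos, one_pow]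
  exact hcontr
end
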